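/- arXiv:1101.5046 — 2 statements merged into one kernel-verified Lean document; each statement's English description precedes it below -/
import Mathlib

section
/- Let P be a nonempty family of subsets of Σ* that is totally ordered by the extension ordering ⊑. Then the union S = ⋃_{s ∈ P} s satisfies s ⊑ S for every s ∈ P; in particular, ⊑ is an inductive ordering on any ⊑-chain-closed family of such sets. -/
def MaximalIn {α : Type*} (β : List α) (S : Set (List α)) : Prop :=
  β ∈ S ∧ ∀ γ ∈ S, β <+: γ → γ = β

def ExtOrd {α : Type*} (S₁ S₂ : Set (List α)) : Prop :=
  S₁ ⊆ S₂ ∧ ∀ w ∈ S₂ \ S₁, ∃ β, MaximalIn β S₁ ∧ β <+: w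

theorem ext_chain_union_upperBound {α : Type*} (P : Set (Set (List α)))
    (hne : P.Nonempty) (hchain : IsChain ExtOrd P) :
    ∀ s ∈ P, ExtOrd s (⋃₀ P) := by
  intro s hs
  constructor
  · exact Set.subset_sUnion_of_mem hs
  · rintro w ⟨hw, hws⟩
    obtain ⟨t, ht, hwt⟩ := hw
    have hst : s ≠ t := fun h => hws (h ▸ hwt)
    rcases hchain hs ht hst with h | h
    · exact h.2 w ⟨hwt, hws⟩
    · exact absurd (h.1 hwt) hws
end

section
/- In any labelled transition system, if p ∼_k q for all k ∈ ℕ and the system is image-finite (each state has finitely many c-successors for each action c), then p and q are bisimilar; i.e., ∼ = ⋂_k ∼_k on image-finite systems. -/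
variable {State Action : Type*}

/-- Stratified bisimulation approximants for an arbitrary LTS `stp`. -/
def approx (stp : State → Action → State → Prop) : ℕ → State → State → Prop
  | 0, _, _ => True
  | k + 1, p, q =>
    (∀ c p', stp p c p' → ∃ q', stp q c q' ∧ approx stp k p' q') ∧
    (∀ c q', stp q c q' → ∃ p', stp p c p' ∧ approx stp k p' q')

def IsBisim (stp : State → Action → State → Prop) (R : State → State → Prop) : Prop :=
  ∀ p q, R p q →
    (∀ c p', stp p c p' → ∃ q', stp q c q' ∧ R p' q') ∧
    (∀ c q', stp q c q' → ∃ p', stp p c p' ∧ R p' q')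

def Bisimilar (stp : State → Action → State → Prop) (p q : State) : Prop :=
  ∃ R, IsBisim stp R ∧ R p q

/-! Every bisimulation is contained in each `∼ₖ`. Conversely `⋂ₖ ∼ₖ` is a bisimulation: if
`p ∼ₖ q` for all `k` and `p →ᶜ p'`, each `∼ₖ₊₁` yields a `c`-successor `q'` of `q` with
`p' ∼ₖ q'`; as `q` has finitely many `c`-successors and the `∼ₖ` decrease, a single one of them
serves for every `k`. -/

theorem Set.Finite.exists_forall_of_antitone {α : Type*} {S : Set α} (hS : S.Finite)
    {P : ℕ → α → Prop} (hP : ∀ s, Antitone (P · s)) (h : ∀ k, ∃ s ∈ S, P k s) :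
    ∃ s ∈ S, ∀ k, P k s := by
  by_contra! hesc
  have := hS.to_subtype
  choose stage hstage using fun s : S => hesc s s.2
  obtain ⟨N, hN⟩ := _root_.Finite.exists_le stage
  obtain ⟨s, hs, hPs⟩ := h N
  exact hstage ⟨s, hs⟩ (hP s (hN _) hPs)

section approx

variable (stp : State → Action → State → Prop)

theorem approx_of_approx_succ (k : ℕ) {p q : State} (h : approx stp (k + 1) p q) :
    approx stp k p q := by
  induction k generalizing p q with
  | zero => trivial
  | succ k ih =>
    obtain ⟨hfwd, hbwd⟩ := h
    refine ⟨fun c p' hp' => ?_, fun c q' hq' => ?_⟩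
    · obtain ⟨q', hq', hk⟩ := hfwd c p' hp'
      exact ⟨q', hq', ih hk⟩
    · obtain ⟨p', hp', hk⟩ := hbwd c q' hq'
      exact ⟨p', hp', ih hk⟩

theorem approx_antitone (p q : State) : Antitone fun k => approx stp k p q :=
  antitone_nat_of_succ_le fun k => approx_of_approx_succ stp k

theorem IsBisim.approx_of_rel {R : State → State → Prop} (hR : IsBisim stp R) (k : ℕ)
    {p q : State} (hpq : R p q) : approx stp k p q := by
  induction k generalizing p q with
  | zero => trivial
  | succ k ih =>
    obtain ⟨hfwd, hbwd⟩ := hR p q hpq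
    refine ⟨fun c p' hp' => ?_, fun c q' hq' => ?_⟩
    · obtain ⟨q', hq', hR'⟩ := hfwd c p' hp'
      exact ⟨q', hq', ih hR'⟩
    · obtain ⟨p', hp', hR'⟩ := hbwd c q' hq'
      exact ⟨p', hp', ih hR'⟩

theorem isBisim_forall_approx (himg : ∀ (s : State) (c : Action), {t | stp s c t}.Finite) :
    IsBisim stp fun p q => ∀ k, approx stp k p q := by
  intro p q hpq
  refine ⟨fun c p' hp' => ?_, fun c q' hq' => ?_⟩
  · exact (himg q c).exists_forall_of_antitone (fun q' => approx_antitone stp p' q')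
      fun k => (hpq (k + 1)).1 c p' hp'
  · exact (himg p c).exists_forall_of_antitone (fun p' => approx_antitone stp p' q')
      fun k => (hpq (k + 1)).2 c q' hq'

end approx

theorem bisim_eq_iInter_approx (stp : State → Action → State → Prop)
    (himg : ∀ (s : State) (c : Action), {t | stp s c t}.Finite) :
    ∀ p q : State, (∀ k : ℕ, approx stp k p q) ↔ Bisimilar stp p q :=
  fun _ _ => ⟨fun h => ⟨_, isBisim_forall_approx stp himg, h⟩,
    fun ⟨_, hR, hpq⟩ k => IsBisim.approx_of_rel stp hR k hpq⟩
end
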